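/- arXiv:1506.00944 — 8 statements merged into one kernel-verified Lean document; each statement's English description precedes it below -/
import Mathlib

section
/- Let ℓ ≥ 2 and let G be a finite simple graph. Then G is an L-cluster graph if and only if G contains no induced subgraph isomorphic to P4 (the chordless path on 4 vertices), to the paw (the complement of P3 ∪ K1, i.e., a triangle with one pendant vertex attached), or to K_{ℓ+2} − e (the complete graph on ℓ+2 vertices minus one edge). -/
open SimpleGraph

variable {V : Type*}

/-- The graph obtained from `G` by applying the edition set `F`
(symmetric difference of the edge set with `F`). -/
def editGraph (G : SimpleGraph V) (F : Finset (Sym2 V)) : SimpleGraph V :=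
  SimpleGraph.fromEdgeSet (symmDiff G.edgeSet (F : Set (Sym2 V)))

/-- An edition set is a finite set of unordered pairs of *distinct* vertices. -/
def IsEditionSet (F : Finset (Sym2 V)) : Prop := ∀ e ∈ F, ¬ e.IsDiag

/-- `S` induces in `G` an `ℓ`-clique: a connected complete (at most) `ℓ`-partite graph,
i.e. `S` splits into at most `ℓ` independent sets with all edges present between
different parts, and the induced subgraph is connected. -/
def IsEllCliqueOn (ℓ : ℕ) (G : SimpleGraph V) (S : Set V) : Prop :=
  (G.induce S).Connected ∧
  ∃ f : V → Fin ℓ, ∀ x ∈ S, ∀ y ∈ S, x ≠ y → (G.Adj x y ↔ f x ≠ f y)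

/-- A cluster graph: every connected component is a clique. -/
def IsCluster (G : SimpleGraph V) : Prop :=
  ∀ c : G.ConnectedComponent, G.IsClique c.supp

/-- A `K_ℓ`-cluster graph: every connected component is an `ℓ`-clique. -/
def IsKlCluster (ℓ : ℕ) (G : SimpleGraph V) : Prop :=
  ∀ c : G.ConnectedComponent, IsEllCliqueOn ℓ G c.supp

/-- An `L`-cluster graph: every connected component is a clique or an `ℓ`-clique. -/
def IsLCluster (ℓ : ℕ) (G : SimpleGraph V) : Prop :=
  ∀ c : G.ConnectedComponent, G.IsClique c.supp ∨ IsEllCliqueOn ℓ G c.supp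

/-- `G` contains an induced subgraph isomorphic to `H`. -/
def Contains {W : Type*} (H : SimpleGraph W) (G : SimpleGraph V) : Prop :=
  Nonempty (H ↪g G)

/-- The paw: a triangle with a pendant vertex (the complement of `P3 ∪ K1`). -/
def paw : SimpleGraph (Fin 4) :=
  SimpleGraph.fromEdgeSet {s(0,1), s(0,2), s(1,2), s(0,3)}

/-- The complete graph on `ℓ + 2` vertices minus one edge. -/
def completeMinusEdge (ℓ : ℕ) : SimpleGraph (Fin (ℓ + 2)) where
  Adj x y := x ≠ y ∧ s(x,y) ≠ s((0 : Fin (ℓ + 2)), 1)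
  symm := ⟨by
    rintro x y ⟨h1, h2⟩
    exact ⟨h1.symm, by rwa [Sym2.eq_swap]⟩⟩
  loopless := ⟨fun x h => h.1 rfl⟩

/-- The graph `G̃` on `V × {1,…,ℓ}`: `(u,p)` is adjacent to `(v,q)` iff `p ≠ q` and
(`u = v` or `uv ∈ E(G)`). -/
def tilde (ℓ : ℕ) (G : SimpleGraph V) : SimpleGraph (V × Fin ℓ) where
  Adj a b := a.2 ≠ b.2 ∧ (a.1 = b.1 ∨ G.Adj a.1 b.1)
  symm := ⟨fun _ _ h => ⟨h.1.symm, h.2.imp Eq.symm (fun h' => h'.symm)⟩⟩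
  loopless := ⟨fun _ h => h.1 rfl⟩

/-- `x` and `y` are twins in `G`: they are distinct and every other vertex is adjacent
to `x` iff it is adjacent to `y`. -/
def IsTwinPair (G : SimpleGraph V) (x y : V) : Prop :=
  x ≠ y ∧ ∀ z, z ≠ x → z ≠ y → (G.Adj z x ↔ G.Adj z y)

/-- The twin class of a vertex. -/
def twinClass (G : SimpleGraph V) (v : V) : Set V :=
  {w | w = v ∨ IsTwinPair G v w}

/-- The set of twin classes of `G`. -/
def twinClasses (G : SimpleGraph V) : Set (Set V) :=
  Set.range (twinClass G)

/-- The number of U-vertices of `G_Q` (singleton twin classes). -/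
noncomputable def Ucount (G : SimpleGraph V) : ℕ :=
  {C ∈ twinClasses G | C.Subsingleton}.ncard

/-- The number of P-vertices of `G_Q` (twin classes of size ≥ 2 of pairwise false twins). -/
noncomputable def Pcount (G : SimpleGraph V) : ℕ :=
  {C ∈ twinClasses G | 2 ≤ C.ncard ∧ ∀ x ∈ C, ∀ y ∈ C, x ≠ y → ¬ G.Adj x y}.ncard

/-- The number of S-vertices of `G_Q` (twin classes of size ≥ 2 of pairwise true twins). -/
noncomputable def Scount (G : SimpleGraph V) : ℕ :=
  {C ∈ twinClasses G | 2 ≤ C.ncard ∧ ∀ x ∈ C, ∀ y ∈ C, x ≠ y → G.Adj x y}.ncard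

/-- The total number of twin classes of `G` (vertices of the Q-quotient graph `G_Q`). -/
noncomputable def Qcount (G : SimpleGraph V) : ℕ :=
  (twinClasses G).ncard

/-- The edition set `F̃ = { {(u,p),(v,q)} : {u,v} ∈ F, p ≠ q }` on `V × {1,…,ℓ}`. -/
def liftEdition [Fintype V] [DecidableEq V] (ℓ : ℕ) (F : Finset (Sym2 V)) :
    Finset (Sym2 (V × Fin ℓ)) :=
  Finset.univ.filter (fun e => ∃ (u v : V) (p q : Fin ℓ),
    p ≠ q ∧ s(u,v) ∈ F ∧ e = s((u,p),(v,q)))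

/-!
A component of an `L`-cluster graph induces a complete multipartite graph (non-adjacency is an
equivalence relation on it), and an `ℓ`-clique has no `(ℓ + 1)`-clique. Neither `P4` nor the paw
is complete multipartite, and `K_{ℓ+2} - e` contains an `(ℓ + 1)`-clique but is not complete.
Conversely, in a connected graph without induced `P4` and paw, a vertex `v` non-adjacent to both
ends of an edge `w₁w₂` is impossible: along a path from `v` to `w₁` the first vertex adjacent to
`w₁` or `w₂` creates a `P4` or a paw. So every component is complete multipartite; if it is not
a clique and has at least `ℓ + 1` parts, two vertices of one part together with one vertex from
each of `ℓ` other parts induce `K_{ℓ+2} - e`.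
-/

lemma Function.Embedding.nonempty_of_isEmpty_fin_succ {α : Type*} {n : ℕ}
    (h : IsEmpty (Fin (n + 1) ↪ α)) : Nonempty (α ↪ Fin n) := by
  rcases finite_or_infinite α with hα | hα
  · have := Fintype.ofFinite α
    refine Function.Embedding.nonempty_of_card_le ?_
    by_contra! hlt
    exact h.false (Function.Embedding.nonempty_of_card_le (by simpa using hlt)).some
  · exact h.elim (Fin.valEmbedding.trans (Infinite.natEmbedding α))

namespace SimpleGraph

variable {W : Type*} {H : SimpleGraph W}

lemma isCompleteMultipartite_top : (⊤ : SimpleGraph W).IsCompleteMultipartite :=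
  ⟨by simp_all⟩

lemma isCompleteMultipartite_and_cliqueFree_iff {n : ℕ} :
    H.IsCompleteMultipartite ∧ H.CliqueFree (n + 1) ↔
      ∃ f : W → Fin n, ∀ x y, H.Adj x y ↔ f x ≠ f y := by
  constructor
  · rintro ⟨hH, hc⟩
    obtain ⟨g⟩ : Nonempty (Quotient hH.setoid ↪ Fin n) := by
      refine Function.Embedding.nonempty_of_isEmpty_fin_succ ⟨fun r => ?_⟩
      have hr : ∀ i j, H.Adj (r i).out (r j).out ↔ i ≠ j := fun i j => by
        rw [← not_iff_not, not_not, ← r.injective.eq_iff, ← Quotient.out_equiv_out]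
        rfl
      exact (Embedding.isContained ⟨⟨fun i => (r i).out, fun i j h => by
        by_contra hne; exact ((hr i j).mpr hne).ne h⟩, hr _ _⟩).not_cliqueFree hc
    refine ⟨fun x => g ⟦x⟧, fun x y => ?_⟩
    rw [ne_eq, g.injective.eq_iff, Quotient.eq]
    exact not_not.symm
  · rintro ⟨f, hf⟩
    refine ⟨⟨fun x y z hxy hyz => ?_⟩, ?_⟩
    · simp only [hf, not_not] at hxy hyz ⊢
      exact hxy.trans hyz
    · rw [cliqueFree_iff]
      refine ⟨fun r => ?_⟩
      have : Function.Injective (f ∘ r) := fun i j hij => by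
        by_contra hne
        exact (hf _ _).mp (r.toHom.map_adj hne) hij
      simpa using Fintype.card_le_of_injective _ this

lemma Connected.exists_embedding_induce_supp {G : SimpleGraph V} (hH : H.Connected)
    (e : H ↪g G) : ∃ c : G.ConnectedComponent, Nonempty (H ↪g G.induce c.supp) := by
  obtain ⟨x₀⟩ := hH.nonempty
  have hmem : ∀ x, e x ∈ (G.connectedComponentMk (e x₀)).supp := fun x =>
    ConnectedComponent.sound ((hH.preconnected x₀ x).map e.toHom).symm
  exact ⟨_, ⟨⟨⟨fun x => ⟨e x, hmem x⟩, fun x y h => e.injective (congrArg Subtype.val h)⟩,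
    e.map_adj_iff⟩⟩⟩

end SimpleGraph

section

variable {G : SimpleGraph V} {S : Set V} {ℓ : ℕ}

lemma Contains.of_induce {W : Type*} {H : SimpleGraph W} (h : Contains H (G.induce S)) :
    Contains H G :=
  let ⟨e⟩ := h; ⟨(Embedding.induce S).comp e⟩

lemma isEllCliqueOn_iff_induce : IsEllCliqueOn ℓ G S ↔
    (G.induce S).Connected ∧ ∃ f : S → Fin ℓ, ∀ x y, (G.induce S).Adj x y ↔ f x ≠ f y := by
  constructor
  · rintro ⟨hconn, f, hf⟩
    refine ⟨hconn, fun x => f x, fun x y => ?_⟩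
    by_cases hxy : x = y
    · simp [hxy]
    · exact hf x x.2 y y.2 (Subtype.coe_ne_coe.mpr hxy)
  · rintro ⟨hconn, f, hf⟩
    obtain ⟨v⟩ := hconn.nonempty
    classical
    refine ⟨hconn, fun x => if hx : x ∈ S then f ⟨x, hx⟩ else f v, fun x hx y hy _ => ?_⟩
    simpa [hx, hy] using hf ⟨x, hx⟩ ⟨y, hy⟩

lemma isEllCliqueOn_iff : IsEllCliqueOn ℓ G S ↔ (G.induce S).Connected ∧
    (G.induce S).IsCompleteMultipartite ∧ (G.induce S).CliqueFree (ℓ + 1) := by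
  rw [isEllCliqueOn_iff_induce, isCompleteMultipartite_and_cliqueFree_iff]

lemma not_isCompleteMultipartite_pathGraph_four : ¬ (pathGraph 4).IsCompleteMultipartite :=
  not_isCompleteMultipartite_iff_exists_isPathGraph3Compl.mpr
    ⟨3, 0, 1, ⟨by simp [pathGraph_adj], by simp [pathGraph_adj], by simp [pathGraph_adj]⟩⟩

lemma not_isCompleteMultipartite_paw : ¬ paw.IsCompleteMultipartite :=
  not_isCompleteMultipartite_iff_exists_isPathGraph3Compl.mpr
    ⟨3, 1, 2, ⟨by simp [paw], by simp [paw], by simp [paw]⟩⟩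

lemma paw_connected : paw.Connected :=
  (connected_iff_exists_forall_reachable _).mpr ⟨0, fun w => by
    fin_cases w
    · rfl
    all_goals exact Adj.reachable (by simp [paw])⟩

lemma completeMinusEdge_adj {i j : Fin (ℓ + 2)} :
    (completeMinusEdge ℓ).Adj i j ↔ i ≠ j ∧ (2 ≤ (i : ℕ) ∨ 2 ≤ (j : ℕ)) := by
  simp only [completeMinusEdge, ne_eq, Sym2.eq_iff, Fin.ext_iff, Fin.val_zero, Fin.val_one]
  omega

lemma completeMinusEdge_connected (hℓ : 1 ≤ ℓ) : (completeMinusEdge ℓ).Connected := by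
  refine (connected_iff_exists_forall_reachable _).mpr ⟨⟨2, by omega⟩, fun w => ?_⟩
  by_cases hw : w = ⟨2, by omega⟩
  · rw [hw]
  · exact (completeMinusEdge_adj.mpr ⟨Ne.symm hw, Or.inl le_rfl⟩).reachable

lemma not_cliqueFree_completeMinusEdge : ¬ (completeMinusEdge ℓ).CliqueFree (ℓ + 1) :=
  IsContained.not_cliqueFree (Embedding.isContained ⟨Fin.succEmb _, fun {i j} => by
    simp only [Fin.coe_succEmb, top_adj, completeMinusEdge_adj, Fin.val_succ, ne_eq,
      Fin.succ_inj]
    omega⟩)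

lemma contains_pathGraph_four {a b c d : V} (hab : G.Adj a b) (hbc : G.Adj b c)
    (hcd : G.Adj c d) (hac : ¬ G.Adj a c) (had : ¬ G.Adj a d) (hbd : ¬ G.Adj b d)
    (hnac : a ≠ c) (hnbd : b ≠ d) : Contains (pathGraph 4) G := by
  have hnad : a ≠ d := by rintro rfl; exact hac hcd.symm
  refine ⟨⟨⟨![a, b, c, d], fun i j hij => ?_⟩, fun {i j} => ?_⟩⟩
  · fin_cases i <;> fin_cases j <;> simp_all [eq_comm]
  · change G.Adj (![a, b, c, d] i) (![a, b, c, d] j) ↔ _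
    fin_cases i <;> fin_cases j <;> simp_all [pathGraph_adj, adj_comm]

lemma contains_paw {a b c d : V} (hab : G.Adj a b) (hac : G.Adj a c) (hbc : G.Adj b c)
    (had : G.Adj a d) (hbd : ¬ G.Adj b d) (hcd : ¬ G.Adj c d) : Contains paw G := by
  refine ⟨⟨⟨![a, b, c, d], fun i j hij => ?_⟩, fun {i j} => ?_⟩⟩
  · fin_cases i <;> fin_cases j <;> simp_all [adj_comm]
  · change G.Adj (![a, b, c, d] i) (![a, b, c, d] j) ↔ _
    fin_cases i <;> fin_cases j <;> simp_all [paw, adj_comm]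

lemma contains_completeMinusEdge_of_forall_adj {a b : V} (hab : ¬ G.Adj a b) (hne : a ≠ b)
    (r : (⊤ : SimpleGraph (Fin ℓ)) ↪g G) (hra : ∀ i, G.Adj a (r i)) (hrb : ∀ i, G.Adj b (r i)) :
    Contains (completeMinusEdge ℓ) G := by
  let φ : Fin (ℓ + 2) → V := Fin.cons a (Fin.cons b r)
  have hφ : ∀ i j, G.Adj (φ i) (φ j) ↔ (completeMinusEdge ℓ).Adj i j := by
    intro i j
    rw [completeMinusEdge_adj]
    refine Fin.cases ?_ (Fin.cases ?_ fun i => ?_) i <;>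
      refine Fin.cases ?_ (Fin.cases ?_ fun j => ?_) j <;>
      simp [φ, hab, adj_comm, hra, hrb, Fin.ext_iff]
  refine ⟨⟨⟨φ, fun i j => ?_⟩, hφ _ _⟩⟩
  refine Fin.cases ?_ (Fin.cases ?_ fun i => ?_) i <;>
    refine Fin.cases ?_ (Fin.cases ?_ fun j => ?_) j <;>
    simp [φ, hne, hne.symm, (hra _).ne, (hrb _).ne, (hra _).ne', (hrb _).ne']

lemma IsLCluster.isCompleteMultipartite_induce (hG : IsLCluster ℓ G) (c : G.ConnectedComponent) :
    (G.induce c.supp).IsCompleteMultipartite := by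
  rcases hG c with hc | hc
  · rw [induce_eq_top.mpr hc]
    exact isCompleteMultipartite_top
  · exact (isEllCliqueOn_iff.mp hc).2.1

lemma IsLCluster.not_contains {W : Type*} {H : SimpleGraph W} (hG : IsLCluster ℓ G)
    (hH : H.Connected) (hHm : ¬ H.IsCompleteMultipartite) : ¬ Contains H G := fun ⟨e⟩ => by
  obtain ⟨c, ⟨e'⟩⟩ := hH.exists_embedding_induce_supp e
  exact hHm ((hG.isCompleteMultipartite_induce c).comap e')

lemma IsLCluster.not_contains_completeMinusEdge (hG : IsLCluster ℓ G) (hℓ : 1 ≤ ℓ) :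
    ¬ Contains (completeMinusEdge ℓ) G := fun ⟨e⟩ => by
  obtain ⟨c, ⟨e'⟩⟩ := (completeMinusEdge_connected hℓ).exists_embedding_induce_supp e
  rcases hG c with hc | hc
  · rw [induce_eq_top.mpr hc] at e'
    have hne : e' 0 ≠ e' 1 := e'.injective.ne (by simp)
    exact (e'.map_adj_iff.mp hne).2 rfl
  · exact not_cliqueFree_completeMinusEdge ((isEllCliqueOn_iff.mp hc).2.2.comap e'.isContained)

lemma not_isPathGraph3Compl_of_walk (hP4 : ¬ Contains (pathGraph 4) G) (hpaw : ¬ Contains paw G)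
    {v w₁ : V} (p : G.Walk v w₁) (w₂ : V) : ¬ G.IsPathGraph3Compl v w₁ w₂ := by
  induction p generalizing w₂ with
  | nil => exact fun h => h.not_adj_snd h.adj
  | @cons v u w₁ hvu p ih =>
    intro h
    have ⟨h12, hv1, hv2⟩ := h
    by_cases hu1 : G.Adj u w₁ <;> by_cases hu2 : G.Adj u w₂
    · exact hpaw (contains_paw hu1 hu2 h12 hvu.symm (by rwa [adj_comm]) (by rwa [adj_comm]))
    · exact hP4 (contains_pathGraph_four hvu hu1 h12 hv1 hv2 hu2 h.ne_fst
      (by rintro rfl; exact hv2 hvu))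
    · exact hP4 (contains_pathGraph_four hvu hu2 h12.symm hv2 hv1 hu1 h.ne_snd
      (by rintro rfl; exact hv1 hvu))
    · exact ih w₂ ⟨h12, hu1, hu2⟩

/-- In a complete multipartite graph at most one vertex of a clique lies in the part
`{a, b, …}`, so an `(ℓ + 1)`-clique leaves an `ℓ`-clique joined to both `a` and `b`. -/
lemma SimpleGraph.IsCompleteMultipartite.contains_completeMinusEdge
    (hG : G.IsCompleteMultipartite) {a b : V} (hab : ¬ G.Adj a b) (hne : a ≠ b)
    (hc : ¬ G.CliqueFree (ℓ + 1)) : Contains (completeMinusEdge ℓ) G := by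
  let r := topEmbeddingOfNotCliqueFree hc
  obtain ⟨i₀, hi₀⟩ : ∃ i₀, ∀ i ≠ i₀, G.Adj a (r i) := by
    by_cases h : ∃ i₀, ¬ G.Adj a (r i₀)
    · obtain ⟨i₀, hi₀⟩ := h
      refine ⟨i₀, fun i hi => by_contra fun hai => ?_⟩
      exact hG.trans _ _ _ (by rwa [adj_comm]) hi₀ (r.map_adj_iff.mpr hi)
    · push Not at h
      exact ⟨0, fun i _ => h i⟩
  have hb : ∀ i ≠ i₀, G.Adj b (r i) := fun i hi =>
    by_contra fun hbi => hG.trans _ _ _ hab hbi (hi₀ i hi)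
  exact contains_completeMinusEdge_of_forall_adj hab hne
    (r.comp (Embedding.completeGraph i₀.succAboveEmb)) (fun i => hi₀ _ (i₀.succAbove_ne i))
    (fun i => hb _ (i₀.succAbove_ne i))

lemma SimpleGraph.Connected.isCompleteMultipartite (hG : G.Connected)
    (hP4 : ¬ Contains (pathGraph 4) G) (hpaw : ¬ Contains paw G) : G.IsCompleteMultipartite := by
  by_contra h
  obtain ⟨v, w₁, w₂, hv⟩ := not_isCompleteMultipartite_iff_exists_isPathGraph3Compl.mp h
  exact not_isPathGraph3Compl_of_walk hP4 hpaw (hG.preconnected v w₁).some w₂ hv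

lemma isClique_or_isEllCliqueOn_of_not_contains (hP4 : ¬ Contains (pathGraph 4) G)
    (hpaw : ¬ Contains paw G) (hK : ¬ Contains (completeMinusEdge ℓ) G)
    (c : G.ConnectedComponent) : G.IsClique c.supp ∨ IsEllCliqueOn ℓ G c.supp := by
  have hconn := (ConnectedComponent.maximal_connected_induce_supp c).prop
  have hCM := hconn.isCompleteMultipartite (mt Contains.of_induce hP4) (mt Contains.of_induce hpaw)
  refine or_iff_not_imp_left.mpr fun hcl =>
    isEllCliqueOn_iff.mpr ⟨hconn, hCM, by_contra fun hc => ?_⟩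
  obtain ⟨a, ha, b, hb, hne, hab⟩ : ∃ a ∈ c.supp, ∃ b ∈ c.supp, a ≠ b ∧ ¬ G.Adj a b := by
    simpa [IsClique, Set.Pairwise] using hcl
  exact hK (hCM.contains_completeMinusEdge (a := ⟨a, ha⟩) (b := ⟨b, hb⟩) (by simpa using hab)
    (by simpa using hne) hc).of_induce

end

theorem lCluster_iff_forbidden_general (ℓ : ℕ) (hℓ : 2 ≤ ℓ) (G : SimpleGraph V) :
    IsLCluster ℓ G ↔
      ¬ Contains (SimpleGraph.pathGraph 4) G ∧ ¬ Contains paw G ∧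
        ¬ Contains (completeMinusEdge ℓ) G := by
  refine ⟨fun hG => ⟨?_, ?_, ?_⟩, fun ⟨hP4, hpaw, hK⟩ => ?_⟩
  · exact hG.not_contains (pathGraph_connected 3) not_isCompleteMultipartite_pathGraph_four
  · exact hG.not_contains paw_connected not_isCompleteMultipartite_paw
  · exact hG.not_contains_completeMinusEdge (by omega)
  · exact isClique_or_isEllCliqueOn_of_not_contains hP4 hpaw hK

/-- Proposition 1: `G` is an `L`-cluster graph iff it contains no induced `P4`,
no induced paw, and no induced `K_{ℓ+2} - e`. -/
theorem lCluster_iff_forbidden [Fintype V] (ℓ : ℕ) (hℓ : 2 ≤ ℓ) (G : SimpleGraph V) :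
    IsLCluster ℓ G ↔
      ¬ Contains (SimpleGraph.pathGraph 4) G ∧ ¬ Contains paw G ∧
        ¬ Contains (completeMinusEdge ℓ) G :=
  lCluster_iff_forbidden_general ℓ hℓ G
end

section
/- Every connected finite simple graph that contains no induced P4 (chordless path on 4 vertices) and no induced paw (the complement of P3 ∪ K1, i.e., a triangle with one pendant vertex attached) is a complete multipartite graph: its vertex set can be partitioned into nonempty independent sets I_1, …, I_q such that every vertex of I_i is adjacent to every vertex of I_j whenever i ≠ j. -/
open SimpleGraph

variable {V : Type*}

/-! Non-adjacency is transitive, so its classes are the parts. If `u ~ w` and `v` is adjacent to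
neither, walk from `v` towards `u`: the first vertex of the walk adjacent to `u` or `w`, together
with its predecessor, spans an induced `P4` or paw with `u` and `w`. -/

namespace SimpleGraph

variable {G : SimpleGraph V}

lemma contains_pathGraph_four {a b c d : V} (hab : G.Adj a b) (hbc : G.Adj b c)
    (hcd : G.Adj c d) (hac : ¬G.Adj a c) (had : ¬G.Adj a d) (hbd : ¬G.Adj b d) :
    Contains (pathGraph 4) G := by
  have hac' : a ≠ c := by rintro rfl; exact had hcd
  have had' : a ≠ d := by rintro rfl; exact hbd hab.symm
  have hbd' : b ≠ d := by rintro rfl; exact had hab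
  refine ⟨⟨⟨![a, b, c, d], fun i j h => ?_⟩, fun {i j} => ?_⟩⟩
  · fin_cases i <;> fin_cases j <;> simp_all [hab.ne, hbc.ne, hcd.ne, eq_comm]
  · change G.Adj (![a, b, c, d] i) (![a, b, c, d] j) ↔ _
    fin_cases i <;> fin_cases j <;> simp_all [pathGraph_adj, adj_comm]

lemma contains_paw {a b c d : V} (hab : G.Adj a b) (hac : G.Adj a c) (hbc : G.Adj b c)
    (had : G.Adj a d) (hbd : ¬G.Adj b d) (hcd : ¬G.Adj c d) : Contains paw G := by
  have hbd' : b ≠ d := by rintro rfl; exact hcd hbc.symm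
  have hcd' : c ≠ d := by rintro rfl; exact hbd hbc
  refine ⟨⟨⟨![a, b, c, d], fun i j h => ?_⟩, fun {i j} => ?_⟩⟩
  · fin_cases i <;> fin_cases j <;> simp_all [hab.ne, hac.ne, had.ne, hbc.ne, eq_comm]
  · change G.Adj (![a, b, c, d] i) (![a, b, c, d] j) ↔ _
    fin_cases i <;> fin_cases j <;> simp_all [paw, adj_comm]

theorem not_isPathGraph3Compl_of_reachable (hP4 : ¬Contains (pathGraph 4) G)
    (hpaw : ¬Contains paw G) {v w₁ w₂ : V} (hvw : G.Reachable v w₁) :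
    ¬G.IsPathGraph3Compl v w₁ w₂ := by
  obtain ⟨p⟩ := hvw
  induction p with
  | nil => exact fun h => h.ne_fst rfl
  | @cons v u w₁ hvu _ ih =>
    rintro ⟨h₁₂, hv₁, hv₂⟩
    by_cases hu₁ : G.Adj u w₁ <;> by_cases hu₂ : G.Adj u w₂
    · exact hpaw (contains_paw hu₁ hu₂ h₁₂ hvu.symm (hv₁ ∘ .symm) (hv₂ ∘ .symm))
    · exact hP4 (contains_pathGraph_four h₁₂.symm hu₁.symm hvu.symm (hu₂ ∘ .symm)
        (hv₂ ∘ .symm) (hv₁ ∘ .symm))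
    · exact hP4 (contains_pathGraph_four hvu hu₂ h₁₂.symm hv₂ hv₁ hu₁)
    · exact ih ⟨h₁₂, hu₁, hu₂⟩

theorem isCompleteMultipartite_of_connected (hconn : G.Connected)
    (hP4 : ¬Contains (pathGraph 4) G) (hpaw : ¬Contains paw G) : G.IsCompleteMultipartite :=
  ⟨fun u v _ huv hvw huw => not_isPathGraph3Compl_of_reachable hP4 hpaw (hconn v u)
    ⟨huw, huv ∘ .symm, hvw⟩⟩

theorem IsCompleteMultipartite.exists_surjective_fin [Finite V]
    (h : G.IsCompleteMultipartite) :
    ∃ (q : ℕ) (f : V → Fin q), Function.Surjective f ∧ ∀ x y, G.Adj x y ↔ f x ≠ f y := by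
  obtain ⟨q, ⟨e⟩⟩ := Finite.exists_equiv_fin (Quotient h.setoid)
  refine ⟨q, e ∘ Quotient.mk _, e.surjective.comp Quotient.mk_surjective, fun x y => ?_⟩
  rw [Function.comp_apply, Function.comp_apply, e.injective.ne_iff, Ne, Quotient.eq]
  exact not_not.symm

end SimpleGraph

/-- Every connected graph with no induced `P4` and no induced paw is complete
multipartite: its vertex set partitions into nonempty independent sets with all
edges between different parts. -/
theorem connected_p4_paw_free_is_complete_multipartite [Fintype V] (G : SimpleGraph V)
    (hconn : G.Connected)
    (hP4 : ¬ Contains (SimpleGraph.pathGraph 4) G)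
    (hpaw : ¬ Contains paw G) :
    ∃ (q : ℕ) (f : V → Fin q), Function.Surjective f ∧
      ∀ x y : V, x ≠ y → (G.Adj x y ↔ f x ≠ f y) := by
  obtain ⟨q, f, hf, hadj⟩ :=
    (isCompleteMultipartite_of_connected hconn hP4 hpaw).exists_surjective_fin
  exact ⟨q, f, hf, fun x y _ => hadj x y⟩
end

section
/- Let G be a finite simple graph, 𝓕 a family of graphs, and F an edition set of minimum size among all edition sets F' for which G+F' contains no induced subgraph isomorphic to a member of 𝓕. Write |F| = j. Then the pairs of F can be ordered a_1b_1, …, a_jb_j so that, setting F_0 = ∅ and F_i = {a_1b_1, …, a_ib_i} for i ≥ 1, for every i ∈ {0, …, j−1} the pair a_{i+1}b_{i+1} destroys an induced subgraph of G+F_i isomorphic to a member of 𝓕. -/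
/-!
The order is built greedily. For a proper subset `S ⊂ F` we have `|S| < |F|`, so by minimality
`G + S` still contains an induced copy of some member of `ℱ`. The graphs `G + S` and `G + F`
differ only on the pairs of `F \ S`, so that copy survives in `G + F` unless one of these pairs
has both ends in it; such a pair is the next one in the order.
-/

open SimpleGraph

variable {V : Type*}

section Enumeration

open Finset

variable {α : Type*} [DecidableEq α]

theorem Fin.image_snoc_filter_lt_castSucc {n : ℕ} (f : Fin n → α) (e : α) (i : Fin n) :
    (univ.filter (· < i.castSucc)).image (Fin.snoc f e : Fin (n + 1) → α) =
      (univ.filter (· < i)).image f := by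
  rw [filter_gt_eq_Iio, filter_gt_eq_Iio, Fin.Iio_castSucc, map_eq_image, image_image]
  simp only [Fin.castSuccEmb_apply, Function.comp_def, Fin.snoc_castSucc]

theorem Fin.image_snoc_filter_lt_last {n : ℕ} (f : Fin n → α) (e : α) :
    (univ.filter (· < Fin.last n)).image (Fin.snoc f e : Fin (n + 1) → α) = univ.image f := by
  rw [filter_gt_eq_Iio, Fin.Iio_last_eq_map, map_eq_image, image_image]
  simp only [Fin.castSuccEmb_apply, Function.comp_def, Fin.snoc_castSucc]

theorem Finset.exists_injective_fin_of_forall_ssubset (F : Finset α)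
    (P : Finset α → α → Prop)
    (hP : ∀ S ⊂ F, ∃ e ∈ F, e ∉ S ∧ P S e) {n : ℕ} (hn : n ≤ F.card) :
    ∃ f : Fin n → α, Function.Injective f ∧ (∀ i, f i ∈ F) ∧
      ∀ i, P ((univ.filter (· < i)).image f) (f i) := by
  induction n with
  | zero => exact ⟨Fin.elim0, fun i => i.elim0, fun i => i.elim0, fun i => i.elim0⟩
  | succ n ih =>
    obtain ⟨f, hf_inj, hf_mem, hf_P⟩ := ih (Nat.le_of_succ_le hn)
    have hssubset : univ.image f ⊂ F := by
      refine ssubset_of_subset_of_ne (image_subset_iff.mpr fun i _ => hf_mem i) fun h => ?_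
      have := congrArg card h
      rw [card_image_of_injective _ hf_inj, card_fin] at this
      omega
    obtain ⟨e, he_mem, he_new, he_P⟩ := hP _ hssubset
    refine ⟨Fin.snoc f e, Fin.snoc_injective_iff.mpr ⟨hf_inj, ?_⟩,
      Fin.lastCases ?_ ?_, Fin.lastCases ?_ ?_⟩
    · rintro ⟨i, rfl⟩
      exact he_new (mem_image_of_mem f (mem_univ i))
    · simpa only [Fin.snoc_last] using he_mem
    · intro i; simpa only [Fin.snoc_castSucc] using hf_mem i
    · simpa only [Fin.snoc_last, Fin.image_snoc_filter_lt_last] using he_P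
    · intro i
      simpa only [Fin.snoc_castSucc, Fin.image_snoc_filter_lt_castSucc] using hf_P i

theorem Finset.exists_enumeration_of_forall_ssubset (F : Finset α) (P : Finset α → α → Prop)
    (hP : ∀ S ⊂ F, ∃ e ∈ F, e ∉ S ∧ P S e) :
    ∃ f : Fin F.card → α, Function.Injective f ∧ (∀ e, e ∈ F ↔ ∃ i, f i = e) ∧
      ∀ i, P ((univ.filter (· < i)).image f) (f i) := by
  obtain ⟨f, hf_inj, hf_mem, hf_P⟩ := F.exists_injective_fin_of_forall_ssubset P hP le_rfl
  have himage : univ.image f = F :=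
    eq_of_subset_of_card_le (image_subset_iff.mpr fun i _ => hf_mem i)
      (by rw [card_image_of_injective _ hf_inj, card_fin])
  refine ⟨f, hf_inj, fun e => ?_, hf_P⟩
  conv_lhs => rw [← himage]
  simp only [mem_image, mem_univ, true_and]

end Enumeration

namespace SimpleGraph

variable {G : SimpleGraph V}

theorem editGraph_adj_congr {S T : Finset (Sym2 V)} {x y : V}
    (h : s(x, y) ∈ S ↔ s(x, y) ∈ T) :
    (editGraph G S).Adj x y ↔ (editGraph G T).Adj x y := by
  simp only [editGraph, fromEdgeSet_adj, Set.mem_symmDiff, mem_edgeSet, Finset.mem_coe, h]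

theorem contains_editGraph_of_agreeOn_range {W : Type*} {H : SimpleGraph W}
    {S T : Finset (Sym2 V)} (emb : H ↪g editGraph G S)
    (h : ∀ a ∈ Set.range emb, ∀ b ∈ Set.range emb, s(a, b) ∈ S ↔ s(a, b) ∈ T) :
    Contains H (editGraph G T) :=
  ⟨⟨emb.toEmbedding, fun {x y} =>
    (editGraph_adj_congr (h _ ⟨x, rfl⟩ _ ⟨y, rfl⟩)).symm.trans emb.map_adj_iff⟩⟩

theorem exists_destroying_pair_of_ssubset [DecidableEq V] {ι : Type*} {W : ι → Type*}
    (ℱ : ∀ i, SimpleGraph (W i)) {F S : Finset (Sym2 V)} (hF : IsEditionSet F)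
    (hsol : ∀ i, ¬ Contains (ℱ i) (editGraph G F))
    (hmin : ∀ F' : Finset (Sym2 V), IsEditionSet F' →
      (∀ i, ¬ Contains (ℱ i) (editGraph G F')) → F.card ≤ F'.card)
    (hS : S ⊂ F) :
    ∃ e ∈ F, e ∉ S ∧ ∃ (κ : ι) (emb : ℱ κ ↪g editGraph G S),
      ∃ a b : V, a ∈ Set.range emb ∧ b ∈ Set.range emb ∧ e = s(a, b) := by
  obtain ⟨κ, ⟨emb⟩⟩ : ∃ κ, Contains (ℱ κ) (editGraph G S) := by
    by_contra! hfree
    exact (Finset.card_lt_card hS).not_ge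
      (hmin S (fun e he => hF e (hS.subset he)) hfree)
  by_contra! hnone
  refine hsol κ (contains_editGraph_of_agreeOn_range emb fun a ha b hb => ?_)
  exact ⟨fun h => hS.subset h, fun h => by_contra fun h' => hnone _ h h' κ emb a b ha hb rfl⟩

end SimpleGraph

theorem minimum_edition_set_ordering_general [DecidableEq V] (G : SimpleGraph V)
    {ι : Type*} {W : ι → Type*} (ℱ : ∀ i, SimpleGraph (W i))
    (F : Finset (Sym2 V)) (hF : IsEditionSet F)
    (hsol : ∀ i, ¬ Contains (ℱ i) (editGraph G F))
    (hmin : ∀ F' : Finset (Sym2 V), IsEditionSet F' →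
      (∀ i, ¬ Contains (ℱ i) (editGraph G F')) → F.card ≤ F'.card)
    (j : ℕ) (hj : F.card = j) :
    ∃ f : Fin j → Sym2 V, Function.Injective f ∧ (∀ e, e ∈ F ↔ ∃ i, f i = e) ∧
      ∀ i : Fin j, ∃ (κ : ι)
        (emb : (ℱ κ) ↪g editGraph G ((Finset.univ.filter (fun t : Fin j => t < i)).image f)),
        ∃ a b : V, a ∈ Set.range ⇑emb ∧ b ∈ Set.range ⇑emb ∧ f i = s(a,b) := by
  subst hj
  exact F.exists_enumeration_of_forall_ssubset _
    fun S hS => exists_destroying_pair_of_ssubset ℱ hF hsol hmin hS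

/-- Lemma 2: a minimum edition set `F` (with respect to destroying all induced copies of
members of the family `ℱ`) of size `j` can be ordered `a₁b₁, …, a_jb_j` so that the
`(i+1)`-st edition destroys an induced copy of a member of `ℱ` in `G + F_i`. -/
theorem minimum_edition_set_ordering [Fintype V] [DecidableEq V] (G : SimpleGraph V)
    {ι : Type*} {W : ι → Type*} (ℱ : ∀ i, SimpleGraph (W i))
    (F : Finset (Sym2 V)) (hF : IsEditionSet F)
    (hsol : ∀ i, ¬ Contains (ℱ i) (editGraph G F))
    (hmin : ∀ F' : Finset (Sym2 V), IsEditionSet F' →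
      (∀ i, ¬ Contains (ℱ i) (editGraph G F')) → F.card ≤ F'.card)
    (j : ℕ) (hj : F.card = j) :
    ∃ f : Fin j → Sym2 V, Function.Injective f ∧ (∀ e, e ∈ F ↔ ∃ i, f i = e) ∧
      ∀ i : Fin j, ∃ (κ : ι)
        (emb : (ℱ κ) ↪g editGraph G ((Finset.univ.filter (fun t : Fin j => t < i)).image f)),
        ∃ a b : V, a ∈ Set.range ⇑emb ∧ b ∈ Set.range ⇑emb ∧ f i = s(a,b) :=
  minimum_edition_set_ordering_general G ℱ F hF hsol hmin j hj
end

section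
/- Let ℓ ≥ 2, let G be a finite simple graph, and let F be an edition set for G such that G+F is a cluster graph. Define the edition set F̃ for G̃ by F̃ = { {(u,p),(v,q)} : {u,v} ∈ F, 1 ≤ p,q ≤ ℓ, p ≠ q }. Then |F̃| = ℓ(ℓ−1)·|F|, the graph G̃+F̃ equals the graph (G+F)̃ obtained by applying the tilde construction to G+F, and G̃+F̃ is a K_ℓ-cluster graph whose connected components are exactly the sets C × {1,…,ℓ} for the connected components C of G+F. -/
open SimpleGraph

variable {V : Type*}

/-! Between two distinct layers, adjacency in `G̃` depends only on the projected pair `uv`, and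
`F̃` toggles it exactly when `F` does; pairs inside one fibre `{u} × [ℓ]` are untouched since `F`
has no loops. Hence editing commutes with the lift. Each `uv ∈ F` lifts to one pair per ordered
pair of distinct layers (the order matters because `u ≠ v`), giving `ℓ(ℓ-1)|F|`. Walks in `G̃`
project to walks in `G`, and for `ℓ ≥ 2` a walk in `G` lifts between any two layers, so the
components of `(G+F)̃` are the sets `C × [ℓ]`; as each `C` is a clique, the layer index is the
required `ℓ`-partition. -/

lemma editGraph_adj (G : SimpleGraph V) (F : Finset (Sym2 V)) (u v : V) :
    (editGraph G F).Adj u v ↔ u ≠ v ∧ Xor (G.Adj u v) (s(u, v) ∈ F) := by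
  simp only [editGraph, fromEdgeSet_adj, Set.mem_symmDiff, mem_edgeSet, Finset.mem_coe, Xor]
  tauto

section liftEdition

variable [Fintype V] [DecidableEq V] {ℓ : ℕ}

lemma mem_liftEdition (F : Finset (Sym2 V)) (u v : V) (p q : Fin ℓ) :
    s((u, p), (v, q)) ∈ liftEdition ℓ F ↔ p ≠ q ∧ s(u, v) ∈ F := by
  simp only [liftEdition, Finset.mem_filter, Finset.mem_univ, true_and]
  constructor
  · rintro ⟨u', v', p', q', hpq, hF, he⟩
    rcases Sym2.eq_iff.mp he with ⟨h₁, h₂⟩ | ⟨h₁, h₂⟩ <;> cases h₁ <;> cases h₂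
    · exact ⟨hpq, hF⟩
    · exact ⟨hpq.symm, Sym2.eq_swap ▸ hF⟩
  · rintro ⟨hpq, hF⟩
    exact ⟨u, v, p, q, hpq, hF, rfl⟩

lemma liftEdition_filter_map_fst_eq {F : Finset (Sym2 V)} {u v : V} (hF : s(u, v) ∈ F) :
    {e ∈ liftEdition ℓ F | e.map Prod.fst = s(u, v)} =
      (Finset.univ.offDiag : Finset (Fin ℓ × Fin ℓ)).image
        (fun pq => s((u, pq.1), (v, pq.2))) := by
  ext e
  induction e using Sym2.ind with
  | _ a b =>
  obtain ⟨x, p⟩ := a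
  obtain ⟨y, q⟩ := b
  simp only [Finset.mem_filter, mem_liftEdition, Sym2.map_mk, Finset.mem_image,
    Finset.mem_offDiag, Finset.mem_univ, true_and, Prod.exists]
  constructor
  · rintro ⟨⟨hpq, -⟩, huv⟩
    rcases Sym2.eq_iff.mp huv with ⟨rfl, rfl⟩ | ⟨rfl, rfl⟩
    · exact ⟨p, q, hpq, rfl⟩
    · exact ⟨q, p, hpq.symm, Sym2.eq_swap⟩
  · rintro ⟨p', q', hpq, he⟩
    rcases Sym2.eq_iff.mp he with ⟨h₁, h₂⟩ | ⟨h₁, h₂⟩ <;> cases h₁ <;> cases h₂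
    · exact ⟨⟨hpq, hF⟩, rfl⟩
    · exact ⟨⟨hpq.symm, Sym2.eq_swap ▸ hF⟩, Sym2.eq_swap⟩

lemma card_liftEdition {F : Finset (Sym2 V)} (hF : IsEditionSet F) :
    (liftEdition ℓ F).card = ℓ * (ℓ - 1) * F.card := by
  have hmaps :
      Set.MapsTo (Sym2.map Prod.fst) (liftEdition ℓ F : Set (Sym2 (V × Fin ℓ))) F := by
    intro e he
    obtain ⟨u, v, p, q, -, huv, rfl⟩ := (Finset.mem_filter.mp he).2
    simpa using huv
  rw [Finset.card_eq_sum_card_fiberwise hmaps, Finset.sum_const_nat, mul_comm]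
  intro e he
  induction e using Sym2.ind with
  | _ u v =>
  have huv : u ≠ v := fun h => hF _ he (Sym2.mk_isDiag_iff.mpr h)
  rw [liftEdition_filter_map_fst_eq he, Finset.card_image_of_injective, Finset.offDiag_card,
    Finset.card_univ, Fintype.card_fin, Nat.mul_sub_one]
  rintro ⟨p, q⟩ ⟨p', q'⟩ he'
  rcases Sym2.eq_iff.mp he' with ⟨h₁, h₂⟩ | ⟨h₁, -⟩
  · exact Prod.ext (Prod.ext_iff.mp h₁).2 (Prod.ext_iff.mp h₂).2
  · exact absurd (Prod.ext_iff.mp h₁).1 huv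

lemma editGraph_tilde_liftEdition (G : SimpleGraph V) {F : Finset (Sym2 V)}
    (hF : IsEditionSet F) :
    editGraph (tilde ℓ G) (liftEdition ℓ F) = tilde ℓ (editGraph G F) := by
  have hloop : ∀ w : V, s(w, w) ∉ F := fun w h => hF _ h (Sym2.mk_isDiag_iff.mpr rfl)
  ext ⟨u, p⟩ ⟨v, q⟩
  change _ ↔ p ≠ q ∧ (u = v ∨ (editGraph G F).Adj u v)
  rw [editGraph_adj, mem_liftEdition, editGraph_adj]
  change _ ∧ Xor (p ≠ q ∧ (u = v ∨ G.Adj u v)) _ ↔ _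
  by_cases huv : u = v
  · subst huv
    simp [Xor, hloop u]
  · simp only [Xor, ne_eq, Prod.ext_iff, huv, false_and, not_false_eq_true, false_or,
      true_and]
    tauto

end liftEdition

section tilde

variable {ℓ : ℕ} {H : SimpleGraph V}

lemma SimpleGraph.Reachable.of_tilde {a b : V × Fin ℓ} (h : (tilde ℓ H).Reachable a b) :
    H.Reachable a.1 b.1 := by
  obtain ⟨w⟩ := h
  induction w with
  | nil => rfl
  | cons hadj _ ih =>
    rcases hadj.2 with heq | hadj
    · exact heq ▸ ih
    · exact hadj.reachable.trans ih

lemma SimpleGraph.Reachable.to_tilde (hℓ : 2 ≤ ℓ) {u v : V} (h : H.Reachable u v)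
    (p q : Fin ℓ) :
    (tilde ℓ H).Reachable (u, p) (v, q) := by
  obtain ⟨w⟩ := h
  induction w generalizing p with
  | nil =>
    rcases eq_or_ne p q with rfl | hpq
    · rfl
    · exact Adj.reachable ⟨hpq, Or.inl rfl⟩
  | cons hadj _ ih =>
    obtain ⟨r, hr⟩ := Fintype.exists_ne_of_one_lt_card (by rw [Fintype.card_fin]; omega) p
    exact (Adj.reachable (⟨hr.symm, Or.inr hadj⟩ : (tilde ℓ H).Adj _ _)).trans (ih r)

lemma supp_connectedComponentMk_tilde (hℓ : 2 ≤ ℓ) (a : V × Fin ℓ) :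
    ((tilde ℓ H).connectedComponentMk a).supp =
      (H.connectedComponentMk a.1).supp ×ˢ (Set.univ : Set (Fin ℓ)) := by
  ext ⟨v, q⟩
  simp only [ConnectedComponent.mem_supp_iff, ConnectedComponent.eq, Set.mem_prod,
    Set.mem_univ, and_true]
  exact ⟨Reachable.of_tilde, fun h => h.to_tilde hℓ q a.2⟩

lemma IsCluster.isKlCluster_tilde (hH : IsCluster H) : IsKlCluster ℓ (tilde ℓ H) := by
  intro c
  refine ⟨c.connected_toSimpleGraph, Prod.snd, fun x hx y hy _ => ⟨And.left, fun hp => ?_⟩⟩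
  refine ⟨hp, (eq_or_ne x.1 y.1).imp_right fun h => hH (H.connectedComponentMk x.1) rfl ?_ h⟩
  exact ConnectedComponent.eq.mpr (c.reachable_of_mem_supp hx hy).of_tilde.symm

end tilde

/-- If `G + F` is a cluster graph then the lifted edition set `F̃` has size `ℓ(ℓ-1)·|F|`,
`G̃ + F̃ = (G+F)̃`, and `G̃ + F̃` is a `K_ℓ`-cluster graph whose connected components are
exactly the sets `C × {1,…,ℓ}` for the connected components `C` of `G + F`. -/
theorem liftEdition_props [Fintype V] [DecidableEq V] (ℓ : ℕ) (hℓ : 2 ≤ ℓ)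
    (G : SimpleGraph V) (F : Finset (Sym2 V)) (hF : IsEditionSet F)
    (hclu : IsCluster (editGraph G F)) :
    (liftEdition ℓ F).card = ℓ * (ℓ - 1) * F.card ∧
    editGraph (tilde ℓ G) (liftEdition ℓ F) = tilde ℓ (editGraph G F) ∧
    IsKlCluster ℓ (editGraph (tilde ℓ G) (liftEdition ℓ F)) ∧
    (∀ c' : (editGraph (tilde ℓ G) (liftEdition ℓ F)).ConnectedComponent,
      ∃ c : (editGraph G F).ConnectedComponent,
        c'.supp = c.supp ×ˢ (Set.univ : Set (Fin ℓ))) ∧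
    (∀ c : (editGraph G F).ConnectedComponent,
      ∃ c' : (editGraph (tilde ℓ G) (liftEdition ℓ F)).ConnectedComponent,
        c'.supp = c.supp ×ˢ (Set.univ : Set (Fin ℓ))) := by
  rw [editGraph_tilde_liftEdition G hF]
  refine ⟨card_liftEdition hF, rfl, hclu.isKlCluster_tilde, fun c' => ?_, fun c => ?_⟩
  · induction c' using ConnectedComponent.ind with
    | _ a => exact ⟨_, supp_connectedComponentMk_tilde hℓ a⟩
  · induction c using ConnectedComponent.ind with
    | _ u => exact ⟨_, supp_connectedComponentMk_tilde hℓ (u, ⟨0, by omega⟩)⟩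
end

section
/- Let ℓ ≥ 2, let k ≥ 0 be an integer, and let G be a finite simple graph that is ℓ-partite (ℓ-colorable). Then there exists an edition set F for G with |F| ≤ k such that G+F is a K_ℓ-cluster graph if and only if there exists an edition set F for G with |F| ≤ k such that G+F is an L-cluster graph. -/
open SimpleGraph

variable {V : Type*}

/- The nontrivial direction starts from an edition `F` with `G + F` an `L`-cluster
graph and colours `G` properly with `ℓ` colours. Inside every component of `G + F` that is a
clique but not an `ℓ`-clique, delete the monochromatic edges; that component becomes a union of
complete `ℓ`-partite components. The deleted edges are not edges of `G`, so they were added by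
`F`, and dropping them from `F` yields a smaller edition producing a `K_ℓ`-cluster graph. -/

lemma IsKlCluster.isLCluster {ℓ : ℕ} {G : SimpleGraph V} (h : IsKlCluster ℓ G) :
    IsLCluster ℓ G :=
  fun c => Or.inr (h c)

lemma symmDiff_edgeSet_editGraph {G : SimpleGraph V} {F : Finset (Sym2 V)}
    (hF : IsEditionSet F) : symmDiff G.edgeSet (editGraph G F).edgeSet = F := by
  have hdiag : Disjoint (symmDiff G.edgeSet (F : Set (Sym2 V))) Sym2.diagSet := by
    refine Set.disjoint_left.mpr fun e he hd => ?_
    rcases Set.mem_symmDiff.mp he with ⟨h, _⟩ | ⟨h, _⟩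
    · exact G.not_isDiag_of_mem_edgeSet h hd
    · exact hF e h hd
  rw [editGraph, edgeSet_fromEdgeSet, hdiag.sdiff_eq_left,
    symmDiff_symmDiff_cancel_left]

lemma editGraph_eq_of_coe_eq_symmDiff {G H : SimpleGraph V} {F : Finset (Sym2 V)}
    (hF : (F : Set (Sym2 V)) = symmDiff G.edgeSet H.edgeSet) : editGraph G F = H := by
  rw [editGraph, hF, symmDiff_symmDiff_cancel_left, fromEdgeSet_edgeSet]

lemma exists_subset_editGraph_eq {G H : SimpleGraph V} {F : Finset (Sym2 V)}
    (h : symmDiff G.edgeSet H.edgeSet ⊆ F) : ∃ F' ⊆ F, editGraph G F' = H :=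
  have hfin := F.finite_toSet.subset h
  ⟨hfin.toFinset, by simpa using h, editGraph_eq_of_coe_eq_symmDiff hfin.coe_toFinset⟩

def deleteMonochromaticIn {α : Type*} (H : SimpleGraph V) (c : V → α)
    (P : H.ConnectedComponent → Prop) : SimpleGraph V where
  Adj x y := H.Adj x y ∧ (c x = c y → ¬ P (H.connectedComponentMk x))
  symm := ⟨fun x y ⟨hxy, hc⟩ => ⟨hxy.symm, by
    rw [← ConnectedComponent.connectedComponentMk_eq_of_adj hxy]
    exact fun hcy => hc hcy.symm⟩⟩
  loopless := ⟨fun x h => H.loopless.1 x h.1⟩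

section deleteMonochromaticIn

variable {α : Type*} {H : SimpleGraph V} {c : V → α} {P : H.ConnectedComponent → Prop}

lemma deleteMonochromaticIn_le : deleteMonochromaticIn H c P ≤ H :=
  fun _ _ h => h.1

lemma deleteMonochromaticIn_adj_iff_of_not {x y : V} (hx : ¬ P (H.connectedComponentMk x)) :
    (deleteMonochromaticIn H c P).Adj x y ↔ H.Adj x y :=
  ⟨And.left, fun h => ⟨h, fun _ => hx⟩⟩

lemma deleteMonochromaticIn_adj_iff_of_pos {x y : V} (hx : P (H.connectedComponentMk x)) :
    (deleteMonochromaticIn H c P).Adj x y ↔ H.Adj x y ∧ c x ≠ c y :=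
  and_congr_right fun _ => by simp [hx]

lemma connectedComponentMk_eq_of_deleteMonochromaticIn {x v : V}
    (h : (deleteMonochromaticIn H c P).connectedComponentMk x =
      (deleteMonochromaticIn H c P).connectedComponentMk v) :
    H.connectedComponentMk x = H.connectedComponentMk v :=
  ConnectedComponent.sound ((ConnectedComponent.exact h).mono deleteMonochromaticIn_le)

lemma symmDiff_edgeSet_deleteMonochromaticIn_subset {G : SimpleGraph V} (c : G.Coloring α)
    (P : H.ConnectedComponent → Prop) :
    symmDiff G.edgeSet (deleteMonochromaticIn H c P).edgeSet ⊆
      symmDiff G.edgeSet H.edgeSet := by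
  intro e he
  induction e with
  | _ x y =>
    rcases Set.mem_symmDiff.mp he with ⟨hG, hH'⟩ | ⟨hH', hG⟩
    · refine Set.mem_symmDiff.mpr (Or.inl ⟨hG, fun hH => hH' ?_⟩)
      exact ⟨hH, fun hcxy => absurd hcxy (c.valid hG)⟩
    · exact Set.mem_symmDiff.mpr (Or.inr ⟨deleteMonochromaticIn_le hH', hG⟩)

end deleteMonochromaticIn

/-- A component of an `L`-cluster graph that is not an `ℓ`-clique is a clique, so deleting its
monochromatic edges leaves a complete multipartite graph on the colour classes of `c`. -/
lemma isKlCluster_deleteMonochromaticIn {ℓ : ℕ} {H : SimpleGraph V} (hH : IsLCluster ℓ H)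
    (c : V → Fin ℓ) :
    IsKlCluster ℓ (deleteMonochromaticIn H c fun C => ¬ IsEllCliqueOn ℓ H C.supp) := by
  set H' := deleteMonochromaticIn H c fun C => ¬ IsEllCliqueOn ℓ H C.supp
  intro C'
  refine ⟨C'.connected_toSimpleGraph, ?_⟩
  obtain ⟨v, rfl⟩ := C'.exists_rep
  have hcomp {x : V} (hx : x ∈ (H'.connectedComponentMk v).supp) :
      H.connectedComponentMk x = H.connectedComponentMk v :=
    connectedComponentMk_eq_of_deleteMonochromaticIn hx
  by_cases hv : IsEllCliqueOn ℓ H (H.connectedComponentMk v).supp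
  · obtain ⟨-, f, hf⟩ := id hv
    refine ⟨f, fun x hx y hy hxy => ?_⟩
    rw [deleteMonochromaticIn_adj_iff_of_not (by rw [hcomp hx]; exact not_not.mpr hv)]
    exact hf x (hcomp hx) y (hcomp hy) hxy
  · have hclique := (hH (H.connectedComponentMk v)).resolve_right hv
    refine ⟨c, fun x hx y hy hxy => ?_⟩
    rw [deleteMonochromaticIn_adj_iff_of_pos (by rw [hcomp hx]; exact hv)]
    exact and_iff_right (hclique (hcomp hx) (hcomp hy) hxy)

theorem klClusterEditing_iff_lClusterEditing_general (ℓ k : ℕ)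
    (G : SimpleGraph V) (hcol : G.Colorable ℓ) :
    (∃ F : Finset (Sym2 V), IsEditionSet F ∧ F.card ≤ k ∧
      IsKlCluster ℓ (editGraph G F)) ↔
    (∃ F : Finset (Sym2 V), IsEditionSet F ∧ F.card ≤ k ∧
      IsLCluster ℓ (editGraph G F)) := by
  refine ⟨fun ⟨F, hF, hk, hKl⟩ => ⟨F, hF, hk, hKl.isLCluster⟩, ?_⟩
  rintro ⟨F, hF, hk, hL⟩
  obtain ⟨c⟩ := hcol
  obtain ⟨F', hF'F, hF'⟩ := exists_subset_editGraph_eq <|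
    (symmDiff_edgeSet_deleteMonochromaticIn_subset c _).trans
      (symmDiff_edgeSet_editGraph hF).subset
  exact ⟨F', fun e he => hF e (hF'F he), (Finset.card_le_card hF'F).trans hk,
    hF' ▸ isKlCluster_deleteMonochromaticIn hL c⟩

/-- For an `ℓ`-partite graph `G`, there is a `K_ℓ`-cluster-editing solution of size at
most `k` iff there is an `L`-cluster-editing solution of size at most `k`. -/
theorem klClusterEditing_iff_lClusterEditing [Fintype V] (ℓ k : ℕ) (hℓ : 2 ≤ ℓ)
    (G : SimpleGraph V) (hcol : G.Colorable ℓ) :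
    (∃ F : Finset (Sym2 V), IsEditionSet F ∧ F.card ≤ k ∧
      IsKlCluster ℓ (editGraph G F)) ↔
    (∃ F : Finset (Sym2 V), IsEditionSet F ∧ F.card ≤ k ∧
      IsLCluster ℓ (editGraph G F)) :=
  klClusterEditing_iff_lClusterEditing_general ℓ k G hcol
end

section
/- Let G be a finite simple graph, let F be an edition set for G with |F| = 1, and let G' = G+F. Then U(G') ≤ U(G)+4, P(G') ≤ P(G)+2, S(G') ≤ S(G)+2, and Q(G') ≤ Q(G)+2. -/
open SimpleGraph

variable {V : Type*}

/-!
A twin pair of `G + uv` in which neither vertex is `u` or `v` is already a twin pair of `G`, and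
conversely, since the two graphs agree on every pair with an endpoint outside `{u, v}`. Hence the
twin classes of `G + uv` that avoid `{u, v}` correspond injectively to twin classes of `G` of the
same kind, and at most two twin classes of `G + uv` meet `{u, v}`. The U-vertices get a second
excess of two: a singleton class `{c}` of `G + uv` may come from a class of `G` that is not a
singleton, but then that class contains `u` or `v`.
-/

open Set

theorem Set.ncard_image_le_ncard_image_of_eq_imp_eq {α β γ : Type*} {f : α → β}
    {g : α → γ} {s : Set α} (hs : (g '' s).Finite)
    (h : ∀ x ∈ s, ∀ y ∈ s, g x = g y → f x = f y) :
    (f '' s).ncard ≤ (g '' s).ncard := by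
  rcases s.eq_empty_or_nonempty with rfl | ⟨x₀, -⟩
  · simp
  have : Nonempty α := ⟨x₀⟩
  refine ncard_le_ncard_of_injOn (g ∘ Function.invFunOn f s) ?_ ?_ hs
  · rintro _ ⟨x, hx, rfl⟩
    exact mem_image_of_mem g (Function.invFunOn_mem ⟨x, hx, rfl⟩)
  · rintro _ ⟨x, hx, rfl⟩ _ ⟨y, hy, rfl⟩ hxy
    have hx' : ∃ a ∈ s, f a = f x := ⟨x, hx, rfl⟩
    have hy' : ∃ a ∈ s, f a = f y := ⟨y, hy, rfl⟩
    rw [← Function.invFunOn_eq hx', ← Function.invFunOn_eq hy']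
    exact h _ (Function.invFunOn_mem hx') _ (Function.invFunOn_mem hy') hxy

section TwinClass

variable {G : SimpleGraph V} {u v w x y : V}

theorem IsTwinPair.symm (h : IsTwinPair G x y) : IsTwinPair G y x :=
  ⟨h.1.symm, fun z hzy hzx => (h.2 z hzx hzy).symm⟩

theorem IsTwinPair.trans (hxy : IsTwinPair G x y) (hyz : IsTwinPair G y w) (hxw : x ≠ w) :
    IsTwinPair G x w := by
  refine ⟨hxw, fun z hzx hzw => ?_⟩
  obtain rfl | hzy := eq_or_ne z y
  · rw [G.adj_comm z x, hyz.2 x hxy.1 hxw, G.adj_comm x w, hxy.2 w hxw.symm hyz.1.symm,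
      G.adj_comm]
  · exact (hxy.2 z hzx hzy).trans (hyz.2 z hzy hzw)

theorem mem_twinClass_self (G : SimpleGraph V) (v : V) : v ∈ twinClass G v := Or.inl rfl

theorem mem_twinClass_symm (h : w ∈ twinClass G v) : v ∈ twinClass G w := by
  rcases h with rfl | h
  exacts [mem_twinClass_self G w, Or.inr h.symm]

theorem mem_twinClass_trans (hw : w ∈ twinClass G v) (hu : u ∈ twinClass G w) :
    u ∈ twinClass G v := by
  rcases hw with rfl | hvw
  · exact hu
  rcases hu with rfl | hwu
  · exact Or.inr hvw
  obtain rfl | huv := eq_or_ne u v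
  exacts [mem_twinClass_self G u, Or.inr (hvw.trans hwu huv.symm)]

theorem twinClass_eq_of_mem (h : w ∈ twinClass G v) : twinClass G v = twinClass G w :=
  Set.ext fun _ =>
    ⟨mem_twinClass_trans (mem_twinClass_symm h), mem_twinClass_trans h⟩

theorem twinClass_eq_twinClass_iff : twinClass G v = twinClass G w ↔ w ∈ twinClass G v :=
  ⟨fun h => h ▸ mem_twinClass_self G w, twinClass_eq_of_mem⟩

theorem isTwinPair_of_mem_twinClass (hx : x ∈ twinClass G v) (hy : y ∈ twinClass G v)
    (hxy : x ≠ y) : IsTwinPair G x y := by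
  rw [twinClass_eq_of_mem hx] at hy
  exact hy.resolve_left hxy.symm

theorem adj_of_adj_of_mem_twinClass_left (hx : x ∈ twinClass G v) (hw : w ∈ twinClass G v)
    (hwy : w ≠ y) (h : G.Adj x y) : G.Adj w y := by
  obtain rfl | hwx := eq_or_ne w x
  · exact h
  exact ((isTwinPair_of_mem_twinClass hx hw hwx.symm).2 y h.ne' hwy.symm).1 h.symm |>.symm

theorem adj_of_adj_of_mem_twinClass {x' y' : V} (hx : x ∈ twinClass G v)
    (hy : y ∈ twinClass G v) (hx' : x' ∈ twinClass G v) (hy' : y' ∈ twinClass G v)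
    (hxy' : x' ≠ y') (h : G.Adj x y) : G.Adj x' y' := by
  have hx'y : G.Adj x' y ∨ x' = y := by
    obtain rfl | hne := eq_or_ne x' y
    exacts [Or.inr rfl, Or.inl (adj_of_adj_of_mem_twinClass_left hx hx' hne h)]
  rcases hx'y with hx'y | rfl
  · exact (adj_of_adj_of_mem_twinClass_left hy hy' hxy'.symm hx'y.symm).symm
  · exact (adj_of_adj_of_mem_twinClass_left hx hy' hxy'.symm h).symm

theorem two_le_ncard_twinClass_iff [Finite V] :
    2 ≤ (twinClass G v).ncard ↔ ∃ w ∈ twinClass G v, w ≠ v :=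
  ⟨fun h => exists_ne_of_one_lt_ncard h v, fun ⟨w, hw, hwv⟩ =>
    (one_lt_ncard_iff (toFinite _)).2 ⟨w, v, hw, mem_twinClass_self G v, hwv⟩⟩

end TwinClass

def AgreeOutside (G G' : SimpleGraph V) (X : Set V) : Prop :=
  ∀ x ∉ X, ∀ y, G.Adj x y ↔ G'.Adj x y

theorem agreeOutside_editGraph_singleton (G : SimpleGraph V) (a b : V) :
    AgreeOutside G (editGraph G {s(a, b)}) {a, b} := by
  intro x hx y
  have hne : s(x, y) ≠ s(a, b) := by
    rw [Ne, Sym2.eq_iff]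
    rintro (⟨rfl, -⟩ | ⟨rfl, -⟩) <;> simp at hx
  simp only [editGraph, SimpleGraph.fromEdgeSet_adj, Finset.coe_singleton, mem_symmDiff,
    mem_singleton_iff, hne, SimpleGraph.mem_edgeSet, not_false_eq_true, and_true, false_and,
    or_false]
  exact ⟨fun h => ⟨h, h.ne⟩, And.left⟩

namespace AgreeOutside

variable {G G' : SimpleGraph V} {X : Set V} {v w x y : V}

theorem adj_iff_right (h : AgreeOutside G G' X) (hy : y ∉ X) : G.Adj x y ↔ G'.Adj x y := by
  rw [G.adj_comm, G'.adj_comm]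
  exact h y hy x

theorem isTwinPair_iff (h : AgreeOutside G G' X) (hx : x ∉ X) (hy : y ∉ X) :
    IsTwinPair G x y ↔ IsTwinPair G' x y := by
  simp only [IsTwinPair, h.adj_iff_right hx, h.adj_iff_right hy]

theorem mem_twinClass_iff (h : AgreeOutside G G' X) (hv : v ∉ X) (hw : w ∉ X) :
    w ∈ twinClass G v ↔ w ∈ twinClass G' v :=
  or_congr_right (h.isTwinPair_iff hv hw)

theorem ncard_image_twinClass_le [Finite V] (h : AgreeOutside G G' X) {B : Set V}
    (hB : ∀ v ∈ B, v ∉ X) : (twinClass G' '' B).ncard ≤ (twinClass G '' B).ncard :=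
  ncard_image_le_ncard_image_of_eq_imp_eq (toFinite _) fun v hv w hw hvw => by
    rw [twinClass_eq_twinClass_iff] at hvw ⊢
    exact (h.mem_twinClass_iff (hB v hv) (hB w hw)).1 hvw

theorem ncard_twinClasses_le [Finite V] (h : AgreeOutside G G' X) {p q : Set V → Prop}
    (hpq : ∀ v, Disjoint (twinClass G' v) X → p (twinClass G' v) → q (twinClass G v)) :
    {C ∈ twinClasses G' | p C}.ncard ≤ {C ∈ twinClasses G | q C}.ncard + X.ncard := by
  set B := {v | Disjoint (twinClass G' v) X ∧ p (twinClass G' v)}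
  have hBX : ∀ v ∈ B, v ∉ X := fun v hv => disjoint_left.1 hv.1 (mem_twinClass_self G' v)
  have hcover : {C ∈ twinClasses G' | p C} ⊆ twinClass G' '' B ∪ twinClass G' '' X := by
    rintro _ ⟨⟨v, rfl⟩, hp⟩
    by_cases hd : Disjoint (twinClass G' v) X
    · exact Or.inl ⟨v, ⟨hd, hp⟩, rfl⟩
    · obtain ⟨x, hxv, hxX⟩ := not_disjoint_iff.1 hd
      exact Or.inr ⟨x, hxX, (twinClass_eq_of_mem hxv).symm⟩
  have hBq : twinClass G '' B ⊆ {C ∈ twinClasses G | q C} := by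
    rintro _ ⟨v, hv, rfl⟩
    exact ⟨⟨v, rfl⟩, hpq v hv.1 hv.2⟩
  calc {C ∈ twinClasses G' | p C}.ncard
      ≤ (twinClass G' '' B).ncard + (twinClass G' '' X).ncard :=
        (ncard_le_ncard hcover).trans (ncard_union_le _ _)
    _ ≤ (twinClass G '' B).ncard + X.ncard :=
        add_le_add (h.ncard_image_twinClass_le hBX) ncard_image_le
    _ ≤ {C ∈ twinClasses G | q C}.ncard + X.ncard := by grw [ncard_le_ncard hBq]

theorem exists_common_twin [Finite V] (h : AgreeOutside G G' X)
    (hd : Disjoint (twinClass G' v) X) (h2 : 2 ≤ (twinClass G' v).ncard) :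
    ∃ w ∈ twinClass G v, w ∈ twinClass G' v ∧ w ≠ v ∧ (G.Adj v w ↔ G'.Adj v w) := by
  obtain ⟨w, hw, hwv⟩ := two_le_ncard_twinClass_iff.1 h2
  have hv : v ∉ X := disjoint_left.1 hd (mem_twinClass_self G' v)
  exact ⟨w, (h.mem_twinClass_iff hv (disjoint_left.1 hd hw)).2 hw, hw, hwv, h v hv w⟩

theorem qcount_le [Finite V] (h : AgreeOutside G G' X) : Qcount G' ≤ Qcount G + X.ncard := by
  simpa [Qcount] using h.ncard_twinClasses_le (p := fun _ => True) (q := fun _ => True)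
    fun _ _ _ => trivial

theorem scount_le [Finite V] (h : AgreeOutside G G' X) : Scount G' ≤ Scount G + X.ncard :=
  h.ncard_twinClasses_le fun v hd ⟨h2, hS⟩ => by
    obtain ⟨w, hwG, hwG', hwv, hvw⟩ := h.exists_common_twin hd h2
    have hadj : G.Adj v w := hvw.2 (hS v (mem_twinClass_self G' v) w hwG' hwv.symm)
    exact ⟨two_le_ncard_twinClass_iff.2 ⟨w, hwG, hwv⟩, fun x hx y hy hxy =>
      adj_of_adj_of_mem_twinClass (mem_twinClass_self G v) hwG hx hy hxy hadj⟩

theorem pcount_le [Finite V] (h : AgreeOutside G G' X) : Pcount G' ≤ Pcount G + X.ncard :=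
  h.ncard_twinClasses_le fun v hd ⟨h2, hP⟩ => by
    obtain ⟨w, hwG, hwG', hwv, hvw⟩ := h.exists_common_twin hd h2
    have hnadj : ¬ G.Adj v w := fun hadj =>
      hP v (mem_twinClass_self G' v) w hwG' hwv.symm (hvw.1 hadj)
    exact ⟨two_le_ncard_twinClass_iff.2 ⟨w, hwG, hwv⟩, fun x hx y hy hxy hxy' =>
      hnadj (adj_of_adj_of_mem_twinClass hx hy (mem_twinClass_self G v) hwG hwv.symm hxy')⟩

theorem ucount_le [Finite V] (h : AgreeOutside G G' X) : Ucount G' ≤ Ucount G + 2 * X.ncard := by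
  have hU := h.ncard_twinClasses_le (p := Set.Subsingleton)
    (q := fun C => C.Subsingleton ∨ C ∈ twinClass G '' X) fun v hd hsub => by
      rw [or_iff_not_imp_left, not_subsingleton_iff]
      intro hnt
      obtain ⟨w, hw, hwv⟩ := hnt.exists_ne v
      have hv : v ∉ X := disjoint_left.1 hd (mem_twinClass_self G' v)
      -- a twin `w ∉ X` of `v` in `G` would stay a twin in `G'`
      have hwX : w ∈ X := by
        by_contra hwX
        exact hwv (hsub ((h.mem_twinClass_iff hv hwX).1 hw) (mem_twinClass_self G' v))
      exact ⟨w, hwX, (twinClass_eq_of_mem hw).symm⟩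
  have hsplit : {C ∈ twinClasses G | C.Subsingleton ∨ C ∈ twinClass G '' X} ⊆
      {C ∈ twinClasses G | C.Subsingleton} ∪ twinClass G '' X := by
    rw [sep_or]
    exact union_subset_union_right _ fun _ hC => hC.2
  calc Ucount G'
      ≤ {C ∈ twinClasses G | C.Subsingleton ∨ C ∈ twinClass G '' X}.ncard + X.ncard := hU
    _ ≤ Ucount G + (twinClass G '' X).ncard + X.ncard := by
        grw [ncard_le_ncard hsplit, ncard_union_le]; rfl
    _ ≤ Ucount G + 2 * X.ncard := by grw [ncard_image_le]; omega

end AgreeOutside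

theorem one_edition_quotient_bounds_general [Fintype V] (G : SimpleGraph V)
    (F : Finset (Sym2 V)) (hcard : F.card = 1) :
    Ucount (editGraph G F) ≤ Ucount G + 4 ∧
    Pcount (editGraph G F) ≤ Pcount G + 2 ∧
    Scount (editGraph G F) ≤ Scount G + 2 ∧
    Qcount (editGraph G F) ≤ Qcount G + 2 := by
  obtain ⟨e, rfl⟩ := Finset.card_eq_one.mp hcard
  induction e using Sym2.ind with
  | _ a b =>
    have h := agreeOutside_editGraph_singleton G a b
    have hab : ({a, b} : Set V).ncard ≤ 2 := (ncard_insert_le a {b}).trans (by simp)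
    have hU := h.ucount_le
    have hP := h.pcount_le
    have hS := h.scount_le
    have hQ := h.qcount_le
    omega

/-- Lemma 4: one edge edition increases the number of U-vertices by at most 4, the
numbers of P-vertices and S-vertices by at most 2 each, and the total number of twin
classes by at most 2. -/
theorem one_edition_quotient_bounds [Fintype V] (G : SimpleGraph V)
    (F : Finset (Sym2 V)) (hF : IsEditionSet F) (hcard : F.card = 1) :
    Ucount (editGraph G F) ≤ Ucount G + 4 ∧
    Pcount (editGraph G F) ≤ Pcount G + 2 ∧
    Scount (editGraph G F) ≤ Scount G + 2 ∧
    Qcount (editGraph G F) ≤ Qcount G + 2 :=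
  one_edition_quotient_bounds_general G F hcard
end

section
/- Let ℓ ≥ 2, let k ≥ 0 be an integer, and let G be a finite simple graph none of whose connected components is a clique or an ℓ-clique. If F is an edition set for G with |F| ≤ k such that G+F is an L-cluster graph, then G+F has at most 2k connected components. -/
open SimpleGraph

variable {V : Type*}

/-!
A component of `G + F` containing no endpoint of a pair in `F` is untouched by the edition:
it is also a component of `G`, with the same adjacencies, hence a clique or an `ℓ`-clique of
`G`, which the hypothesis on `G` excludes. So every component of `G + F` contains one of the
at most `2|F|` endpoints of `F`.
-/

namespace SimpleGraph

variable {G H : SimpleGraph V}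

lemma editGraph_adj_iff {F : Finset (Sym2 V)} {x y : V} (h : s(x, y) ∉ F) :
    (editGraph G F).Adj x y ↔ G.Adj x y := by
  simp only [editGraph, fromEdgeSet_adj, Set.mem_symmDiff, Finset.mem_coe, h, not_false_eq_true,
    and_true, false_and, or_false, mem_edgeSet]
  exact ⟨And.left, fun hxy => ⟨hxy, hxy.ne⟩⟩

lemma Reachable.of_forall_adj_imp {S : Set V}
    (hS : ∀ x ∈ S, ∀ y, G.Adj x y → y ∈ S ∧ H.Adj x y) {x y : V} (hx : x ∈ S)
    (hxy : G.Reachable x y) : H.Reachable x y := by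
  obtain ⟨p⟩ := hxy
  induction p with
  | nil => rfl
  | cons hadj _ ih =>
    obtain ⟨hyS, hHadj⟩ := hS _ hx _ hadj
    exact hHadj.reachable.trans (ih hyS)

lemma supp_connectedComponentMk_eq_of_forall_adj_iff {c : H.ConnectedComponent}
    (h : ∀ x ∈ c.supp, ∀ y, H.Adj x y ↔ G.Adj x y) {v : V} (hv : v ∈ c.supp) :
    (G.connectedComponentMk v).supp = c.supp := by
  have hHG : ∀ x ∈ c.supp, ∀ y, H.Adj x y → y ∈ c.supp ∧ G.Adj x y := fun x hx y hxy =>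
    ⟨(c.mem_supp_congr_adj hxy).1 hx, (h x hx y).1 hxy⟩
  have hGH : ∀ x ∈ c.supp, ∀ y, G.Adj x y → y ∈ c.supp ∧ H.Adj x y := fun x hx y hxy =>
    ⟨(c.mem_supp_congr_adj ((h x hx y).2 hxy)).1 hx, (h x hx y).2 hxy⟩
  ext x
  rw [ConnectedComponent.mem_supp_iff, ConnectedComponent.eq]
  constructor
  · intro hxv
    have hvx : H.Reachable v x := hxv.symm.of_forall_adj_imp hGH hv
    rw [ConnectedComponent.mem_supp_iff] at hv ⊢
    rw [← hv]
    exact ConnectedComponent.eq.2 hvx.symm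
  · intro hx
    have hxv : H.Reachable x v := ConnectedComponent.eq.1 (hx.trans hv.symm)
    exact hxv.of_forall_adj_imp hHG hx

lemma isClique_or_isEllCliqueOn_congr {ℓ : ℕ} {S : Set V}
    (h : ∀ x ∈ S, ∀ y ∈ S, G.Adj x y ↔ H.Adj x y) :
    (G.IsClique S ∨ IsEllCliqueOn ℓ G S) ↔ (H.IsClique S ∨ IsEllCliqueOn ℓ H S) := by
  have hind : G.induce S = H.induce S := by
    ext ⟨x, hx⟩ ⟨y, hy⟩
    exact h x hx y hy
  have hclique : G.IsClique S ↔ H.IsClique S :=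
    ⟨fun hc x hx y hy hxy => (h x hx y hy).1 (hc hx hy hxy),
      fun hc x hx y hy hxy => (h x hx y hy).2 (hc hx hy hxy)⟩
  have hpartite : (∃ f : V → Fin ℓ, ∀ x ∈ S, ∀ y ∈ S, x ≠ y → (G.Adj x y ↔ f x ≠ f y)) ↔
      ∃ f : V → Fin ℓ, ∀ x ∈ S, ∀ y ∈ S, x ≠ y → (H.Adj x y ↔ f x ≠ f y) :=
    exists_congr fun f => forall₂_congr fun x hx => forall₂_congr fun y hy => by rw [h x hx y hy]
  rw [hclique, IsEllCliqueOn, IsEllCliqueOn, hind, hpartite]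

lemma natCard_connectedComponent_le_two_mul_card (F : Finset (Sym2 V))
    (h : ∀ c : H.ConnectedComponent, ∃ e ∈ F, ∃ v ∈ e, H.connectedComponentMk v = c) :
    Nat.card H.ConnectedComponent ≤ 2 * F.card := by
  classical
  set T := F.biUnion Sym2.toFinset
  have hsurj : Function.Surjective fun v : T => H.connectedComponentMk v := by
    intro c
    obtain ⟨e, he, v, hv, rfl⟩ := h c
    exact ⟨⟨v, Finset.mem_biUnion.2 ⟨e, he, Sym2.mem_toFinset.2 hv⟩⟩, rfl⟩
  calc Nat.card H.ConnectedComponent ≤ Nat.card T := Nat.card_le_card_of_surjective _ hsurj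
    _ = T.card := Nat.card_eq_finsetCard T
    _ ≤ ∑ e ∈ F, e.toFinset.card := Finset.card_biUnion_le
    _ ≤ ∑ _e ∈ F, 2 := Finset.sum_le_sum fun e _ => by
      rw [Sym2.card_toFinset]
      split_ifs <;> norm_num
    _ = 2 * F.card := by rw [Finset.sum_const, smul_eq_mul, mul_comm]

end SimpleGraph

theorem components_le_two_k_general (ℓ k : ℕ) (G : SimpleGraph V)
    (hG : ∀ c : G.ConnectedComponent,
      ¬ (G.IsClique c.supp ∨ IsEllCliqueOn ℓ G c.supp))
    (F : Finset (Sym2 V)) (hk : F.card ≤ k)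
    (hL : IsLCluster ℓ (editGraph G F)) :
    Nat.card (editGraph G F).ConnectedComponent ≤ 2 * k := by
  refine (natCard_connectedComponent_le_two_mul_card F fun c => ?_).trans (by omega)
  by_contra! hc
  have hagree : ∀ x ∈ c.supp, ∀ y, (editGraph G F).Adj x y ↔ G.Adj x y := fun x hx y =>
    editGraph_adj_iff fun he => hc _ he x (Sym2.mem_mk_left x y) hx
  obtain ⟨v, hv⟩ := c.exists_rep
  apply hG (G.connectedComponentMk v)
  rw [supp_connectedComponentMk_eq_of_forall_adj_iff hagree hv]
  exact (isClique_or_isEllCliqueOn_congr fun x hx y _ => hagree x hx y).1 (hL c)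

/-- If `G` has no clique or `ℓ`-clique component and `G + F` is an `L`-cluster graph with
`|F| ≤ k`, then `G + F` has at most `2k` connected components. -/
theorem components_le_two_k [Fintype V] (ℓ k : ℕ) (hℓ : 2 ≤ ℓ) (G : SimpleGraph V)
    (hG : ∀ c : G.ConnectedComponent,
      ¬ (G.IsClique c.supp ∨ IsEllCliqueOn ℓ G c.supp))
    (F : Finset (Sym2 V)) (hF : IsEditionSet F) (hk : F.card ≤ k)
    (hL : IsLCluster ℓ (editGraph G F)) :
    Nat.card (editGraph G F).ConnectedComponent ≤ 2 * k :=
  components_le_two_k_general ℓ k G hG F hk hL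
end

section
/- Let ℓ ≥ 2, let k ≥ 0 be an integer, let G be a finite simple graph, and let M be a twin class of G of size greater than ℓ+k whose vertices are pairwise true twins (an S-vertex of G_Q, inducing a clique). Then for every edition set F for G with |F| ≤ k such that G+F is an L-cluster graph, no pair of F has an endpoint in M. -/
open SimpleGraph

variable {V : Type*}

/-! Let `a ∈ M` and `s(a, b) ∈ F`. Being a clique on more than `#F + 2` vertices, `M` stays inside
one component `C` of `G + F`. If `C` is an `ℓ`-clique, every two vertices of `M` in the same part
lost their edge, so `#M ≤ ℓ + #F ≤ ℓ + k`. If `C` is a clique, `b` lands in `C` and so was not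
adjacent to `a` in `G`; as `M` is a twin class, `b` is then adjacent in `G` to no vertex of `M` but
in `G + F` to all of them, so `#M ≤ #F`. -/

open Finset

lemma adj_iff_of_mem_twinClass {G : SimpleGraph V} {v x y c : V} (hc : c ∉ twinClass G v)
    (hx : x ∈ twinClass G v) (hy : y ∈ twinClass G v) : G.Adj c x ↔ G.Adj c y := by
  have adj_iff_adj_center : ∀ z ∈ twinClass G v, G.Adj c z ↔ G.Adj c v := by
    rintro z (rfl | ⟨hvz, htwin⟩)
    · rfl
    · refine (htwin c (fun h => hc (Or.inl h)) ?_).symm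
      rintro rfl
      exact hc (Or.inr ⟨hvz, htwin⟩)
  rw [adj_iff_adj_center x hx, adj_iff_adj_center y hy]

section Editing

variable {G : SimpleGraph V} {F : Finset (Sym2 V)} {x y : V}

lemma editGraph_adj_of_notMem (hxy : x ≠ y) (h : s(x, y) ∉ F) :
    (editGraph G F).Adj x y ↔ G.Adj x y := by
  simp only [editGraph, fromEdgeSet_adj, Set.mem_symmDiff, mem_edgeSet, mem_coe]
  tauto

lemma editGraph_adj_of_mem (hxy : x ≠ y) (h : s(x, y) ∈ F) :
    (editGraph G F).Adj x y ↔ ¬ G.Adj x y := by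
  simp only [editGraph, fromEdgeSet_adj, Set.mem_symmDiff, mem_edgeSet, mem_coe]
  tauto

lemma exists_sym2_notMem {S : Finset V} (hS : #F < #S) (b : V) : ∃ m ∈ S, s(b, m) ∉ F := by
  by_contra! h
  have : #S ≤ #F :=
    card_le_card_of_injOn (fun m => s(b, m)) h fun _ _ _ _ => Sym2.congr_right.1
  omega

lemma exists_common_sym2_notMem {S : Finset V} (hS : #F + 2 < #S)
    (hx : x ∈ S) (hy : y ∈ S) (hxy : x ≠ y) :
    ∃ z ∈ S, z ≠ x ∧ z ≠ y ∧ s(x, z) ∉ F ∧ s(y, z) ∉ F := by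
  classical
  by_contra! h
  set T := (S.erase x).erase y
  have hmaps : Set.MapsTo (fun z => if s(x, z) ∈ F then s(x, z) else s(y, z)) T F := by
    intro z hz
    simp only [T, coe_erase, Set.mem_sdiff, mem_coe, Set.mem_singleton_iff] at hz
    dsimp only
    split_ifs with hxz
    · exact hxz
    · exact h z hz.1.1 hz.1.2 hz.2 hxz
  have hinj : Set.InjOn (fun z => if s(x, z) ∈ F then s(x, z) else s(y, z)) T := by
    intro z hz w hw hzw
    simp only [T, coe_erase, Set.mem_sdiff, mem_coe, Set.mem_singleton_iff] at hz hw
    dsimp only at hzw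
    split_ifs at hzw <;> rw [Sym2.eq_iff] at hzw <;> tauto
  have hT : #T ≤ #F := card_le_card_of_injOn _ hmaps hinj
  have : #T = #S - 2 := by
    rw [card_erase_of_mem (mem_erase.2 ⟨hxy.symm, hy⟩), card_erase_of_mem hx]; omega
  omega

lemma editGraph_reachable_of_isClique {S : Finset V} (hS : G.IsClique (S : Set V))
    (hcard : #F + 2 < #S) (hx : x ∈ S) (hy : y ∈ S) : (editGraph G F).Reachable x y := by
  obtain rfl | hxy := eq_or_ne x y
  · rfl
  obtain ⟨z, hz, hzx, hzy, hxz, hyz⟩ := exists_common_sym2_notMem hcard hx hy hxy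
  have hxz' := (editGraph_adj_of_notMem hzx.symm hxz).2 (hS hx hz hzx.symm)
  have hyz' := (editGraph_adj_of_notMem hzy.symm hyz).2 (hS hy hz hzy.symm)
  exact hxz'.reachable.trans hyz'.symm.reachable

end Editing

lemma card_le_card_add_card_of_monochromatic_sym2_mem {ι : Type*} [Fintype ι] (f : V → ι)
    {S : Finset V} {F : Finset (Sym2 V)}
    (h : ∀ x ∈ S, ∀ y ∈ S, x ≠ y → f x = f y → s(x, y) ∈ F) :
    #S ≤ Fintype.card ι + #F := by
  classical
  obtain rfl | ⟨x₀, -⟩ := S.eq_empty_or_nonempty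
  · simp
  have : Nonempty V := ⟨x₀⟩
  set rep := Function.invFunOn f (S : Set V)
  have hrep : ∀ x ∈ S, rep (f x) ∈ S ∧ f (rep (f x)) = f x :=
    fun x hx => Function.invFunOn_pos ⟨x, hx, rfl⟩
  -- representatives are counted by their colour, the other vertices by their pair with theirs
  have hreps : #{x ∈ S | x = rep (f x)} ≤ Fintype.card ι := by
    refine card_le_card_of_injOn f (fun _ _ => mem_coe.2 (mem_univ _)) ?_
    intro x hx y hy hxy
    rw [mem_coe, mem_filter] at hx hy
    rw [hx.2, hy.2, hxy]
  have hothers : #{x ∈ S | ¬ x = rep (f x)} ≤ #F := by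
    refine card_le_card_of_injOn (fun x => s(x, rep (f x))) ?_ ?_
    · intro x hx
      rw [mem_coe, mem_filter] at hx
      exact h x hx.1 _ (hrep x hx.1).1 hx.2 (hrep x hx.1).2.symm
    · intro x hx y hy hxy
      rw [mem_coe, mem_filter] at hx hy
      rcases Sym2.eq_iff.1 hxy with ⟨hxy, -⟩ | ⟨hxy, hyx⟩
      · exact hxy
      · have : f x = f y := by rw [hxy, (hrep y hy.1).2]
        exact absurd (by rw [this, ← hxy]) hx.2
  have := card_filter_add_card_filter_not (s := S) (fun x => x = rep (f x))
  omega

section Components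

variable {G : SimpleGraph V} {F : Finset (Sym2 V)} {S : Finset V}

lemma card_le_of_isClique_of_isEllCliqueOn {ℓ : ℕ} {T : Set V} (hS : G.IsClique (S : Set V))
    (hST : (S : Set V) ⊆ T) (hT : IsEllCliqueOn ℓ (editGraph G F) T) : #S ≤ ℓ + #F := by
  obtain ⟨-, f, hf⟩ := hT
  have hmono : ∀ x ∈ S, ∀ y ∈ S, x ≠ y → f x = f y → s(x, y) ∈ F := by
    intro x hx y hy hxy hfxy
    by_contra hxyF
    exact (hf x (hST hx) y (hST hy) hxy).1
      ((editGraph_adj_of_notMem hxy hxyF).2 (hS hx hy hxy)) hfxy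
  simpa using card_le_card_add_card_of_monochromatic_sym2_mem f hmono

lemma sym2_notMem_of_isClique_supp (hS : G.IsClique (S : Set V))
    (hmod : ∀ c ∉ S, ∀ x ∈ S, ∀ y ∈ S, G.Adj c x ↔ G.Adj c y) (hcard : #F < #S)
    {C : (editGraph G F).ConnectedComponent} (hSC : ∀ x ∈ S, x ∈ C.supp)
    (hC : (editGraph G F).IsClique C.supp) {a b : V} (hab : a ≠ b) (ha : a ∈ S) :
    s(a, b) ∉ F := by
  intro he
  have hbC : b ∈ C.supp := by
    by_cases hGab : G.Adj a b
    · by_cases hb : b ∈ S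
      · exact hSC b hb
      obtain ⟨m, hm, hbm⟩ := exists_sym2_notMem hcard b
      have hbm' : b ≠ m := fun h => hb (h ▸ hm)
      have := (editGraph_adj_of_notMem hbm' hbm).2 ((hmod b hb a ha m hm).1 hGab.symm)
      exact (C.mem_supp_congr_adj this).2 (hSC m hm)
    · exact (C.mem_supp_congr_adj ((editGraph_adj_of_mem hab he).2 hGab)).1 (hSC a ha)
  have hGab : ¬ G.Adj a b := (editGraph_adj_of_mem hab he).1 (hC (hSC a ha) hbC hab)
  have hb : b ∉ S := fun hb => hGab (hS ha hb hab)
  obtain ⟨m, hm, hbm⟩ := exists_sym2_notMem hcard b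
  have hbm' : b ≠ m := fun h => hb (h ▸ hm)
  have hGbm := (editGraph_adj_of_notMem hbm' hbm).1 (hC hbC (hSC m hm) hbm')
  exact hGab ((hmod b hb m hm a ha).1 hGbm).symm

end Components

theorem large_sVertex_untouched_general (ℓ k : ℕ) (hℓ : 2 ≤ ℓ) (G : SimpleGraph V)
    (M : Set V) (hM : ∃ v, M = twinClass G v) (hsize : ℓ + k < M.ncard)
    (hclique : ∀ x ∈ M, ∀ y ∈ M, x ≠ y → G.Adj x y) :
    ∀ F : Finset (Sym2 V), IsEditionSet F → F.card ≤ k →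
      IsLCluster ℓ (editGraph G F) →
      ∀ e ∈ F, ∀ v, v ∈ e → v ∉ M := by
  intro F hF hFk hL e he a hae haM
  obtain ⟨v, rfl⟩ := hM
  obtain ⟨b, rfl⟩ := Sym2.mem_iff_exists.1 hae
  have hab : a ≠ b := fun h => hF _ he (Sym2.mk_isDiag_iff.2 h)
  have hfin : (twinClass G v).Finite := Set.finite_of_ncard_pos (by omega)
  set S := hfin.toFinset
  have hS : G.IsClique (S : Set V) := by rwa [hfin.coe_toFinset]
  have hcard : ℓ + #F < #S := by rw [← Set.ncard_eq_toFinset_card _ hfin]; omega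
  set C := (editGraph G F).connectedComponentMk a
  have hSC : ∀ x ∈ S, x ∈ C.supp := fun x hx =>
    (C.mem_supp_iff x).2 <| ConnectedComponent.sound <|
      editGraph_reachable_of_isClique hS (by omega) hx (hfin.mem_toFinset.2 haM)
  rcases hL C with hC | hC
  · refine sym2_notMem_of_isClique_supp hS (fun c hc x hx y hy => ?_) (by omega) hSC hC hab
      (hfin.mem_toFinset.2 haM) he
    simp only [S, Set.Finite.mem_toFinset] at hc hx hy
    exact adj_iff_of_mem_twinClass hc hx hy
  · have := card_le_of_isClique_of_isEllCliqueOn hS hSC hC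
    omega

/-- If `M` is a twin class of `G` of size greater than `ℓ + k` whose vertices are pairwise
true twins, then no `L`-cluster-editing set of size at most `k` touches `M`. -/
theorem large_sVertex_untouched [Fintype V] (ℓ k : ℕ) (hℓ : 2 ≤ ℓ) (G : SimpleGraph V)
    (M : Set V) (hM : ∃ v, M = twinClass G v) (hsize : ℓ + k < M.ncard)
    (hclique : ∀ x ∈ M, ∀ y ∈ M, x ≠ y → G.Adj x y) :
    ∀ F : Finset (Sym2 V), IsEditionSet F → F.card ≤ k →
      IsLCluster ℓ (editGraph G F) →
      ∀ e ∈ F, ∀ v, v ∈ e → v ∉ M :=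
  large_sVertex_untouched_general ℓ k hℓ G M hM hsize hclique
end
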